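/- arXiv:1609.08304 — 2 statements merged into one kernel-verified Lean document; each statement's English description precedes it below -/
import Mathlib

section
/- Let (V,C,u) be an order unit space with a strictly convex cone, and let g : C° → C° be a bijective antihomogeneous order-antimorphism. If x, y ∈ C° are linearly independent, then g(x) and g(y) are linearly independent and g maps C°(x,y) onto C°(g(x),g(y)). -/
/-!
For `p, q ∈ C°` let `M(p/q) = inf {β > 0 : β q - p ∈ C}`. The infimum is attained, at the
boundary point `M(p/q) q - p`, and `M(p/r) ≤ M(p/q) M(q/r)`. An antihomogeneous
order-antimorphism satisfies `M(g q / g p) = M(p/q)`, so it preserves the equality case of this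
inequality, with the order of the three points reversed.

Strict convexity turns the equality case into a planar condition. Equality forces the boundary
points `M(p/q) q - p` and `M(q/r) r - q` onto a common ray, hence `q ∈ span {p, r}`. Conversely a
plane through `C°` meets `∂C` in only two rays, so of three pairwise independent points of such a
plane one lies between the other two. Applying this to `g` and to its inverse gives the claim.
-/

open Set Filter Topology

variable {V : Type*} [NormedAddCommGroup V] [NormedSpace ℝ V]

/-- `(V, C, u)` is an order unit space whose norm is the order unit norm of `(C, u)`:
`C` is an Archimedean cone and `u` is an order unit of it. -/
structure IsOrderUnitSpace (C : Set V) (u : V) : Prop where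
  convex : Convex ℝ C
  smul_mem : ∀ l : ℝ, 0 ≤ l → ∀ x ∈ C, l • x ∈ C
  salient : C ∩ (-C) = {0}
  archimedean : ∀ x : V, ∀ y ∈ C, (∀ n : ℕ, 0 < n → y - (n : ℝ) • x ∈ C) → -x ∈ C
  unit_mem : u ∈ C
  order_unit : ∀ x : V, ∃ l : ℝ, 0 ≤ l ∧ l • u - x ∈ C
  norm_eq : ∀ x : V, ‖x‖ = sInf {l : ℝ | 0 < l ∧ x + l • u ∈ C ∧ l • u - x ∈ C}

/-- `M(x/y) = inf {β > 0 : x ≤_C β y}`. -/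
noncomputable def Mratio (C : Set V) (x y : V) : ℝ :=
  sInf {b : ℝ | 0 < b ∧ b • y - x ∈ C}

/-- The cone `C` is strictly convex: the open segment between any two linearly
independent boundary points lies in the interior. -/
def StrictlyConvexCone (C : Set V) : Prop :=
  ∀ x ∈ frontier C, ∀ y ∈ frontier C, LinearIndependent ℝ ![x, y] →
    openSegment ℝ x y ⊆ interior C

/-- `g` is antihomogeneous on the interior of `C`: `g (λ x) = λ⁻¹ g x`. -/
def IsAntihomogeneous (C : Set V) (g : V → V) : Prop :=
  ∀ l : ℝ, 0 < l → ∀ x ∈ interior C, g (l • x) = l⁻¹ • g x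

/-- `g` is an order-antimorphism of the interior of `C`: `x ≤_C y ↔ g y ≤_C g x`. -/
def IsOrderAntimorphism (C : Set V) (g : V → V) : Prop :=
  ∀ x ∈ interior C, ∀ y ∈ interior C, (y - x ∈ C ↔ g x - g y ∈ C)

/-- A state of `(V, C, u)`: a positive linear functional with `φ u = 1`. -/
def IsState (C : Set V) (u : V) (φ : V →ₗ[ℝ] ℝ) : Prop :=
  (∀ x ∈ C, 0 ≤ φ x) ∧ φ u = 1

open Pointwise Submodule

lemma eventually_add_smul_mem_of_mem_interior {S : Set V} {a : V} (ha : a ∈ interior S) (z : V) :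
    ∀ᶠ t in 𝓝[>] (0 : ℝ), 0 < t ∧ a + t • z ∈ S :=
  eventually_mem_nhdsWithin.and <| (((continuous_const.add
    (continuous_id.smul continuous_const)).tendsto' 0 a (by simp)).eventually
      (mem_interior_iff_mem_nhds.mp ha)).filter_mono nhdsWithin_le_nhds

section LinearAlgebra

variable {a b x y : V}

lemma notMem_span_singleton_of_linearIndependent (hxy : LinearIndependent ℝ ![x, y]) :
    x ∉ span ℝ {y} := fun hx => by
  obtain ⟨t, rfl⟩ := mem_span_singleton.1 hx
  simpa using LinearIndependent.pair_iff.1 hxy 1 (-t) (by module)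

lemma span_pair_eq_of_linearIndependent (ha : a ∈ span ℝ {x, y}) (hb : b ∈ span ℝ {x, y})
    (hab : LinearIndependent ℝ ![a, b]) : span ℝ {a, b} = span ℝ {x, y} := by
  rw [← Matrix.range_cons_cons_empty a b ![], ← Matrix.range_cons_cons_empty x y ![]] at *
  have := FiniteDimensional.span_of_finite ℝ (finite_range ![x, y])
  refine eq_of_le_of_finrank_le (span_le.2 ?_) ?_
  · rintro _ ⟨i, rfl⟩
    fin_cases i
    exacts [ha, hb]
  · rw [finrank_span_eq_card hab]
    exact (finrank_range_le_card _).trans_eq (Fintype.card_fin 2)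

end LinearAlgebra

section Mratio

variable {C : Set V} {p q r : V}

lemma Mratio_le {b : ℝ} (hb : 0 < b) (hmem : b • q - p ∈ C) : Mratio C p q ≤ b :=
  csInf_le ⟨0, fun _ hb => hb.1.le⟩ ⟨hb, hmem⟩

lemma Mratio_nonneg : 0 ≤ Mratio C p q :=
  Real.sInf_nonneg fun _ hb => hb.1.le

noncomputable def Mwitness (C : Set V) (p q : V) : V := Mratio C p q • q - p

/-- `log (Mratio C p q)` is the Funk weak metric of the cone, and `MratioBetween C p q r` is the
equality case of its triangle inequality. -/
def MratioBetween (C : Set V) (p q r : V) : Prop :=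
  Mratio C p r = Mratio C p q * Mratio C q r

lemma Mwitness_ne_zero (hpq : LinearIndependent ℝ ![p, q]) : Mwitness C p q ≠ 0 := fun h0 => by
  simpa using (LinearIndependent.pair_iff.1 hpq) (-1) (Mratio C p q)
    (by rw [← h0, Mwitness]; module)

lemma Mwitness_mem_span {P : Submodule ℝ V} (hp : p ∈ P) (hq : q ∈ P) : Mwitness C p q ∈ P :=
  P.sub_mem (P.smul_mem _ hq) hp

lemma not_sameRay_Mwitness_swap (hpq : LinearIndependent ℝ ![p, q]) :
    ¬ SameRay ℝ (Mwitness C p q) (Mwitness C q p) := fun hW => by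
  obtain ⟨t, ht, hW⟩ := hW.exists_pos_left (Mwitness_ne_zero hpq)
    (Mwitness_ne_zero (LinearIndependent.pair_symm_iff.1 hpq))
  have hc : 0 < 1 + t * Mratio C p q :=
    add_pos_of_pos_of_nonneg one_pos (mul_nonneg ht.le Mratio_nonneg)
  have := ((LinearIndependent.pair_iff.1 hpq) (Mratio C q p + t) (-(1 + t * Mratio C p q))
    (by unfold Mwitness at hW; linear_combination (norm := module) -hW)).2
  linarith

lemma mem_span_pair_of_sameRay_Mwitness (hpq : LinearIndependent ℝ ![p, q])
    (hqr : LinearIndependent ℝ ![q, r]) (hW : SameRay ℝ (Mwitness C p q) (Mwitness C q r)) :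
    q ∈ span ℝ {p, r} := by
  obtain ⟨t, ht, hW⟩ := hW.exists_pos_left (Mwitness_ne_zero hpq) (Mwitness_ne_zero hqr)
  have hc : 0 < 1 + t * Mratio C p q :=
    add_pos_of_pos_of_nonneg one_pos (mul_nonneg ht.le Mratio_nonneg)
  refine mem_span_pair.2 ⟨(1 + t * Mratio C p q)⁻¹ * t, (1 + t * Mratio C p q)⁻¹ * Mratio C q r, ?_⟩
  rw [mul_smul, mul_smul, ← smul_add, inv_smul_eq_iff₀ hc.ne']
  unfold Mwitness at hW
  linear_combination (norm := module) -hW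

end Mratio

namespace IsOrderUnitSpace

variable {C : Set V} {u : V} (h : IsOrderUnitSpace C u) {g : V → V} {a b c p q r v x y : V}
include h

lemma add_mem (ha : a ∈ C) (hb : b ∈ C) : a + b ∈ C := by
  convert h.smul_mem 2 zero_le_two _ (h.convex ha hb (by norm_num) (by norm_num) (add_halves 1))
    using 1
  module

lemma eq_zero_of_mem_of_neg_mem (ha : a ∈ C) (hna : -a ∈ C) : a = 0 := by
  have : a ∈ C ∩ -C := ⟨ha, by simpa using hna⟩
  rwa [h.salient] at this

lemma smul_mem_iff {l : ℝ} (hl : 0 < l) : l • a ∈ C ↔ a ∈ C :=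
  ⟨fun hla => by
    simpa [smul_smul, inv_mul_cancel₀ hl.ne'] using h.smul_mem l⁻¹ (by positivity) _ hla,
    h.smul_mem l hl.le a⟩

lemma smul_mem_interior {l : ℝ} (hl : 0 < l) (ha : a ∈ interior C) : l • a ∈ interior C :=
  interior_maximal (by rintro _ ⟨z, hz, rfl⟩; exact h.smul_mem l hl.le z (interior_subset hz))
    (isOpen_interior.smul₀ hl.ne') (smul_mem_smul_set ha)

lemma add_mem_interior (ha : a ∈ C) (hb : b ∈ interior C) : a + b ∈ interior C :=
  interior_maximal (by rintro _ ⟨z, hz, rfl⟩; exact h.add_mem ha (interior_subset hz))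
    (isOpen_interior.vadd a) (vadd_mem_vadd_set hb)

lemma ne_zero_of_mem_interior [Nontrivial V] (ha : a ∈ interior C) : a ≠ 0 := by
  rintro rfl
  have hC : C ∈ 𝓝 (0 : V) := mem_interior_iff_mem_nhds.mp ha
  have : ({0} : Set V) ∈ 𝓝 (0 : V) := h.salient ▸ inter_mem hC (neg_mem_nhds_zero V hC)
  simpa [interior_singleton] using mem_interior_iff_mem_nhds.mpr this

lemma smul_unit_sub_mem {z : V} {e : ℝ} (he : ‖z‖ < e) : e • u - z ∈ C := by
  obtain ⟨l, hl0, hl⟩ := h.order_unit z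
  obtain ⟨m, hm0, hm⟩ := h.order_unit (-z)
  have hne : {l : ℝ | 0 < l ∧ z + l • u ∈ C ∧ l • u - z ∈ C}.Nonempty := by
    refine ⟨l + m + 1, by positivity, ?_, ?_⟩
    · convert h.add_mem hm (h.smul_mem (l + 1) (by positivity) u h.unit_mem) using 1
      module
    · convert h.add_mem hl (h.smul_mem (m + 1) (by positivity) u h.unit_mem) using 1
      module
  rw [h.norm_eq] at he
  obtain ⟨l', ⟨-, -, hl'⟩, hl'e⟩ := exists_lt_of_csInf_lt hne he
  convert h.add_mem hl' (h.smul_mem (e - l') (by linarith) u h.unit_mem) using 1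
  module

lemma isClosed : IsClosed C := by
  refine isClosed_of_closure_subset fun z hz => ?_
  have hzu : ∀ e > (0 : ℝ), z + e • u ∈ C := fun e he => by
    obtain ⟨c, hc, hcz⟩ := Metric.mem_closure_iff.mp hz e he
    rw [dist_eq_norm'] at hcz
    convert h.add_mem hc (h.smul_unit_sub_mem hcz) using 1
    module
  simpa using h.archimedean (-z) u h.unit_mem fun n hn => by
    have hn : (0 : ℝ) < n := by exact_mod_cast hn
    convert h.smul_mem n hn.le _ (hzu (n : ℝ)⁻¹ (by positivity)) using 1
    rw [smul_add, smul_smul, mul_inv_cancel₀ hn.ne', one_smul]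
    module

lemma mem_frontier_iff : a ∈ frontier C ↔ a ∈ C ∧ a ∉ interior C := by
  rw [h.isClosed.frontier_eq]; rfl

lemma exists_smul_sub_mem (hq : q ∈ interior C) (p : V) : ∃ b > (0 : ℝ), b • q - p ∈ C := by
  obtain ⟨s, hs, hmem⟩ := (eventually_add_smul_mem_of_mem_interior hq (-p)).exists
  refine ⟨s⁻¹, inv_pos.2 hs, ?_⟩
  convert h.smul_mem s⁻¹ (inv_nonneg.2 hs.le) _ hmem using 1
  rw [smul_add, smul_smul, inv_mul_cancel₀ hs.ne', one_smul, sub_eq_add_neg]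

lemma smul_sub_mem_of_Mratio_lt (hq : q ∈ interior C) {t : ℝ} (ht : Mratio C p q < t) :
    t • q - p ∈ C := by
  obtain ⟨b, ⟨-, hb⟩, hbt⟩ := exists_lt_of_csInf_lt (h.exists_smul_sub_mem hq p) ht
  convert h.add_mem hb (h.smul_mem (t - b) (by linarith) q (interior_subset hq)) using 1
  module

lemma Mratio_smul_sub_mem (hq : q ∈ interior C) : Mratio C p q • q - p ∈ C :=
  (h.isClosed.preimage (f := fun b : ℝ => b • q - p) (by fun_prop)).closure_subset_iff.2
    (fun _ ht => h.smul_sub_mem_of_Mratio_lt hq ht)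
    (by rw [closure_Ioi]; exact self_mem_Ici : Mratio C p q ∈ closure (Ioi (Mratio C p q)))

lemma Mratio_pos [Nontrivial V] (hp : p ∈ interior C) (hq : q ∈ interior C) :
    0 < Mratio C p q := by
  obtain ⟨e, he, hpe⟩ := (eventually_add_smul_mem_of_mem_interior hp (-q)).exists
  refine he.trans_le (le_csInf (h.exists_smul_sub_mem hq p) fun b ⟨_, hb⟩ => ?_)
  by_contra! hbe
  have hC : (b - e) • q ∈ C := by convert h.add_mem hb hpe using 1; module
  have hnC : -((b - e) • q) ∈ C := by
    convert h.smul_mem (e - b) (by linarith) q (interior_subset hq) using 1; module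
  exact smul_ne_zero (sub_ne_zero.2 hbe.ne) (h.ne_zero_of_mem_interior hq)
    (h.eq_zero_of_mem_of_neg_mem hC hnC)

lemma smul_mem_frontier {l : ℝ} (hl : 0 < l) (ha : a ∈ frontier C) : l • a ∈ frontier C := by
  rw [h.mem_frontier_iff] at ha ⊢
  refine ⟨h.smul_mem l hl.le a ha.1, fun hla => ha.2 ?_⟩
  simpa [smul_smul, inv_mul_cancel₀ hl.ne'] using h.smul_mem_interior (inv_pos.2 hl) hla

lemma Mwitness_mem_frontier [Nontrivial V] (hp : p ∈ interior C) (hq : q ∈ interior C) :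
    Mwitness C p q ∈ frontier C := by
  refine h.mem_frontier_iff.2 ⟨h.Mratio_smul_sub_mem hq, fun hW => ?_⟩
  obtain ⟨t, ⟨ht, hmem⟩, -, htM⟩ := ((eventually_add_smul_mem_of_mem_interior hW (-q)).and
    (Ioo_mem_nhdsGT (h.Mratio_pos hp hq))).exists
  have := Mratio_le (p := p) (q := q) (sub_pos.2 htM)
    (by convert hmem using 1; rw [Mwitness]; module)
  linarith

lemma Mratio_eq_of_mem_frontier (hq : q ∈ interior C) {b : ℝ} (hb : 0 < b)
    (hfr : b • q - p ∈ frontier C) : Mratio C p q = b := by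
  rw [h.mem_frontier_iff] at hfr
  refine (Mratio_le hb hfr.1).antisymm (not_lt.1 fun hlt => hfr.2 ?_)
  convert h.add_mem_interior (h.Mratio_smul_sub_mem (p := p) hq)
    (h.smul_mem_interior (sub_pos.2 hlt) hq) using 1
  module

lemma mratioBetween_of_sameRay [Nontrivial V] (hp : p ∈ interior C) (hq : q ∈ interior C)
    (hr : r ∈ interior C) (hpq : LinearIndependent ℝ ![p, q]) (hqr : LinearIndependent ℝ ![q, r])
    (hW : SameRay ℝ (Mwitness C p q) (Mwitness C q r)) : MratioBetween C p q r := by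
  obtain ⟨t, ht, hW⟩ := hW.exists_pos_left (Mwitness_ne_zero hpq) (Mwitness_ne_zero hqr)
  have hM := h.Mratio_pos hp hq
  refine h.Mratio_eq_of_mem_frontier hr (mul_pos hM (h.Mratio_pos hq hr)) ?_
  convert h.smul_mem_frontier (by positivity : 0 < Mratio C p q * t + 1)
    (h.Mwitness_mem_frontier hp hq) using 1
  unfold Mwitness at hW ⊢
  linear_combination (norm := module) -Mratio C p q • hW

lemma sameRay_of_not_linearIndependent (ha : a ∈ C) (hb : b ∈ C)
    (hab : ¬ LinearIndependent ℝ ![a, b]) : SameRay ℝ a b := by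
  rcases sameRay_or_sameRay_neg_iff_not_linearIndependent.2 hab with hab | hab
  · exact hab
  rcases eq_or_ne a 0 with rfl | ha0
  · exact SameRay.zero_left b
  rcases eq_or_ne b 0 with rfl | hb0
  · exact SameRay.zero_right a
  obtain ⟨t, ht, hab⟩ := hab.exists_pos_left ha0 (neg_ne_zero.2 hb0)
  exact absurd (h.eq_zero_of_mem_of_neg_mem hb (hab ▸ h.smul_mem t ht.le a ha)) hb0

lemma smul_add_smul_mem_interior (hsc : StrictlyConvexCone C) (ha : a ∈ frontier C)
    (hb : b ∈ frontier C) (hab : LinearIndependent ℝ ![a, b]) {s t : ℝ} (hs : 0 < s)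
    (ht : 0 < t) : s • a + t • b ∈ interior C := by
  have hst : s + t ≠ 0 := (add_pos hs ht).ne'
  convert h.smul_mem_interior (add_pos hs ht) (hsc a ha b hb hab
    ⟨s / (s + t), t / (s + t), by positivity, by positivity, by field_simp, rfl⟩) using 1
  rw [smul_add, smul_smul, smul_smul, mul_div_cancel₀ _ hst, mul_div_cancel₀ _ hst]

lemma sameRay_Mwitness_of_mratioBetween (hsc : StrictlyConvexCone C) [Nontrivial V]
    (hp : p ∈ interior C) (hq : q ∈ interior C) (hr : r ∈ interior C)
    (hE : MratioBetween C p q r) : SameRay ℝ (Mwitness C p q) (Mwitness C q r) := by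
  refine (h.sameRay_of_not_linearIndependent (h.Mratio_smul_sub_mem hr)
    (h.Mratio_smul_sub_mem hq) fun hind => ?_).symm
  -- by `hE`, `Mwitness C p r = Mratio C p q • Mwitness C q r + Mwitness C p q`
  have hsum := h.smul_add_smul_mem_interior hsc (h.Mwitness_mem_frontier hq hr)
    (h.Mwitness_mem_frontier hp hq) hind (h.Mratio_pos hp hq) one_pos
  refine (h.mem_frontier_iff.1 (h.Mwitness_mem_frontier hp hr)).2 ?_
  convert hsum using 1
  unfold Mwitness
  rw [hE]
  module

lemma mem_span_pair_of_mratioBetween (hsc : StrictlyConvexCone C) [Nontrivial V]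
    (hp : p ∈ interior C) (hq : q ∈ interior C) (hr : r ∈ interior C)
    (hpq : LinearIndependent ℝ ![p, q]) (hqr : LinearIndependent ℝ ![q, r])
    (hE : MratioBetween C p q r) : q ∈ span ℝ {p, r} :=
  mem_span_pair_of_sameRay_Mwitness hpq hqr (h.sameRay_Mwitness_of_mratioBetween hsc hp hq hr hE)

lemma sameRay_or_sameRay_of_mem_frontier (hsc : StrictlyConvexCone C) (ha : a ∈ frontier C)
    (hb : b ∈ frontier C) (hc : c ∈ frontier C) (haP : a ∈ span ℝ {x, y})
    (hbP : b ∈ span ℝ {x, y}) (hcP : c ∈ span ℝ {x, y}) (hab : ¬ SameRay ℝ a b) (hc0 : c ≠ 0) :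
    SameRay ℝ a c ∨ SameRay ℝ b c := by
  by_contra! hne
  have hC : ∀ {w}, w ∈ frontier C → w ∈ C := fun hw => (h.mem_frontier_iff.1 hw).1
  have hind : ∀ {w w'}, w ∈ frontier C → w' ∈ frontier C → ¬ SameRay ℝ w w' →
      LinearIndependent ℝ ![w, w'] := fun hw hw' hww' =>
    by_contra fun hdep => hww' (h.sameRay_of_not_linearIndependent (hC hw) (hC hw') hdep)
  have hb0 : b ≠ 0 := by rintro rfl; exact hab (SameRay.zero_right a)
  have ha0 : a ≠ 0 := by rintro rfl; exact hab (SameRay.zero_left b)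
  obtain ⟨α, β, rfl⟩ := mem_span_pair.1
    ((span_pair_eq_of_linearIndependent haP hbP (hind ha hb hab)).symm ▸ hcP)
  have hα : α ≠ 0 := by
    rintro rfl
    exact (LinearIndependent.pair_iff' hb0).1 (hind hb hc hne.2) β (by simp)
  have hβ : β ≠ 0 := by
    rintro rfl
    exact (LinearIndependent.pair_iff' ha0).1 (hind ha hc hne.1) α (by simp)
  rcases hα.lt_or_gt with hα | hα <;> rcases hβ.lt_or_gt with hβ | hβ
  · refine hc0 (h.eq_zero_of_mem_of_neg_mem (hC hc) ?_)
    convert h.add_mem (h.smul_mem (-α) (by linarith) a (hC ha))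
      (h.smul_mem (-β) (by linarith) b (hC hb)) using 1
    module
  · refine (h.mem_frontier_iff.1 hb).2 ?_
    convert h.smul_add_smul_mem_interior hsc hc ha (hind hc ha fun h' => hne.1 h'.symm)
      (inv_pos.2 hβ) (div_pos (neg_pos.2 hα) hβ) using 1
    rw [smul_add, smul_smul, smul_smul, inv_mul_cancel₀ hβ.ne', one_smul]
    module
  · refine (h.mem_frontier_iff.1 ha).2 ?_
    convert h.smul_add_smul_mem_interior hsc hc hb (hind hc hb fun h' => hne.2 h'.symm)
      (inv_pos.2 hα) (div_pos (neg_pos.2 hβ) hα) using 1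
    rw [smul_add, smul_smul, smul_smul, inv_mul_cancel₀ hα.ne', one_smul]
    module
  · exact (h.mem_frontier_iff.1 hc).2
      (h.smul_add_smul_mem_interior hsc ha hb (hind ha hb hab) hα hβ)

lemma exists_mratioBetween (hsc : StrictlyConvexCone C) [Nontrivial V] (hx : x ∈ interior C)
    (hv : v ∈ interior C) (hy : y ∈ interior C) (hvP : v ∈ span ℝ {x, y})
    (hxv : LinearIndependent ℝ ![x, v]) (hvy : LinearIndependent ℝ ![v, y])
    (hxy : LinearIndependent ℝ ![x, y]) :
    MratioBetween C x v y ∨ MratioBetween C v x y ∨ MratioBetween C x y v := by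
  have hxP : x ∈ span ℝ {x, y} := subset_span (mem_insert x {y})
  have hyP : y ∈ span ℝ {x, y} := subset_span (mem_insert_of_mem x rfl)
  have hvx := LinearIndependent.pair_symm_iff.1 hxv
  have hyv := LinearIndependent.pair_symm_iff.1 hvy
  -- `Mwitness C x v` and `Mwitness C v x` lie on the two boundary rays of the plane
  have ray : ∀ {p q}, p ∈ interior C → q ∈ interior C → p ∈ span ℝ {x, y} →
      q ∈ span ℝ {x, y} → LinearIndependent ℝ ![p, q] →
      SameRay ℝ (Mwitness C x v) (Mwitness C p q) ∨ SameRay ℝ (Mwitness C v x) (Mwitness C p q) :=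
    fun hp hq hpP hqP hpq => h.sameRay_or_sameRay_of_mem_frontier hsc
      (h.Mwitness_mem_frontier hx hv) (h.Mwitness_mem_frontier hv hx)
      (h.Mwitness_mem_frontier hp hq) (Mwitness_mem_span hxP hvP) (Mwitness_mem_span hvP hxP)
      (Mwitness_mem_span hpP hqP) (not_sameRay_Mwitness_swap hxv) (Mwitness_ne_zero hpq)
  rcases ray hv hy hvP hyP hvy with hvy' | hvy'
  · exact .inl (h.mratioBetween_of_sameRay hx hv hy hxv hvy hvy')
  rcases ray hx hy hxP hyP hxy with hxy' | hxy'
  · rcases ray hy hv hyP hvP hyv with hyv' | hyv'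
    · exact .inr <| .inr <| h.mratioBetween_of_sameRay hx hy hv hxy hyv <|
        hxy'.symm.trans hyv' fun h0 => absurd h0 (Mwitness_ne_zero hxv)
    · exact absurd (hvy'.symm.trans hyv' fun h0 => absurd h0 (Mwitness_ne_zero hvx))
        (not_sameRay_Mwitness_swap hvy)
  · exact .inr <| .inl <| h.mratioBetween_of_sameRay hv hx hy hvx hxy hxy'

lemma Mratio_apply_apply (hanti : IsAntihomogeneous C g) (hmor : IsOrderAntimorphism C g)
    (hp : p ∈ interior C) (hq : q ∈ interior C) : Mratio C (g q) (g p) = Mratio C p q := by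
  unfold Mratio
  congr 1
  ext b
  refine and_congr_right fun hb => ?_
  rw [hmor p hp (b • q) (h.smul_mem_interior hb hq), hanti b hb q hq,
    ← h.smul_mem_iff hb (a := g p - b⁻¹ • g q),
    smul_sub, smul_smul, mul_inv_cancel₀ hb.ne', one_smul]

lemma mratioBetween_apply (hanti : IsAntihomogeneous C g) (hmor : IsOrderAntimorphism C g)
    (hp : p ∈ interior C) (hq : q ∈ interior C) (hr : r ∈ interior C)
    (hE : MratioBetween C p q r) : MratioBetween C (g r) (g q) (g p) := by
  unfold MratioBetween at *
  rw [h.Mratio_apply_apply hanti hmor hp hr, h.Mratio_apply_apply hanti hmor hq hr,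
    h.Mratio_apply_apply hanti hmor hp hq, hE, mul_comm]

lemma linearIndependent_apply [Nontrivial V] (hmaps : MapsTo g (interior C) (interior C))
    (hinj : InjOn g (interior C)) (hanti : IsAntihomogeneous C g) (hp : p ∈ interior C)
    (hq : q ∈ interior C) (hpq : LinearIndependent ℝ ![p, q]) :
    LinearIndependent ℝ ![g p, g q] := by
  by_contra hdep
  obtain ⟨t, ht, hgt⟩ := (h.sameRay_of_not_linearIndependent (interior_subset (hmaps hp))
    (interior_subset (hmaps hq)) hdep).exists_pos_left (h.ne_zero_of_mem_interior (hmaps hp))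
    (h.ne_zero_of_mem_interior (hmaps hq))
  have hqp : q = t⁻¹ • p := hinj hq (h.smul_mem_interior (inv_pos.2 ht) hp)
    (by rw [hanti _ (inv_pos.2 ht) p hp, inv_inv, hgt])
  exact (LinearIndependent.pair_iff' (h.ne_zero_of_mem_interior hp)).1 hpq t⁻¹ hqp.symm

lemma apply_mem_span_pair (hsc : StrictlyConvexCone C) [Nontrivial V]
    (hmaps : MapsTo g (interior C) (interior C)) (hinj : InjOn g (interior C))
    (hanti : IsAntihomogeneous C g) (hmor : IsOrderAntimorphism C g) (hx : x ∈ interior C) (hy : y ∈ interior C) (hxy : LinearIndependent ℝ ![x, y])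
    (hvP : v ∈ span ℝ {x, y}) (hv : v ∈ interior C) : g v ∈ span ℝ {g x, g y} := by
  have hgx : g x ∈ span ℝ {g x, g y} := subset_span (mem_insert _ _)
  have hgy : g y ∈ span ℝ {g x, g y} := subset_span (mem_insert_of_mem _ rfl)
  have parallel : ∀ {w}, w ∈ interior C → ¬ LinearIndependent ℝ ![w, v] →
      g w ∈ span ℝ {g x, g y} → g v ∈ span ℝ {g x, g y} := fun hw hwv hgw => by
    obtain ⟨t, ht, rfl⟩ := (h.sameRay_of_not_linearIndependent (interior_subset hw)
      (interior_subset hv) hwv).exists_pos_left (h.ne_zero_of_mem_interior hw)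
      (h.ne_zero_of_mem_interior hv)
    rw [hanti t ht _ hw]
    exact Submodule.smul_mem _ _ hgw
  by_cases hxv : LinearIndependent ℝ ![x, v]
  swap; · exact parallel hx hxv hgx
  by_cases hyv : LinearIndependent ℝ ![y, v]
  swap; · exact parallel hy hyv hgy
  have hvx := LinearIndependent.pair_symm_iff.1 hxv
  have hvy := LinearIndependent.pair_symm_iff.1 hyv
  have hyx := LinearIndependent.pair_symm_iff.1 hxy
  have gind : ∀ {p q}, p ∈ interior C → q ∈ interior C → LinearIndependent ℝ ![p, q] →
      LinearIndependent ℝ ![g p, g q] := h.linearIndependent_apply hmaps hinj hanti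
  rw [pair_comm]
  rcases h.exists_mratioBetween hsc hx hv hy hvP hxv hvy hxy with hE | hE | hE
  · exact h.mem_span_pair_of_mratioBetween hsc (hmaps hy) (hmaps hv) (hmaps hx) (gind hy hv hyv)
      (gind hv hx hvx) (h.mratioBetween_apply hanti hmor hx hv hy hE)
  · have hgx' := h.mem_span_pair_of_mratioBetween hsc (hmaps hy) (hmaps hx) (hmaps hv)
      (gind hy hx hyx) (gind hx hv hxv) (h.mratioBetween_apply hanti hmor hv hx hy hE)
    rw [pair_comm] at hgx' ⊢
    exact mem_span_insert_exchange hgx'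
      (notMem_span_singleton_of_linearIndependent (gind hx hy hxy))
  · exact mem_span_insert_exchange (h.mem_span_pair_of_mratioBetween hsc (hmaps hv) (hmaps hy)
      (hmaps hx) (gind hv hy hvy) (gind hy hx hyx) (h.mratioBetween_apply hanti hmor hx hy hv hE))
      (notMem_span_singleton_of_linearIndependent (gind hy hx hyx))

lemma isAntihomogeneous_invFunOn (hbij : BijOn g (interior C) (interior C))
    (hanti : IsAntihomogeneous C g) : IsAntihomogeneous C (Function.invFunOn g (interior C)) := by
  intro l hl z hz
  have hinv := hbij.invOn_invFunOn
  have hmaps := hbij.surjOn.mapsTo_invFunOn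
  refine hbij.injOn (hmaps (h.smul_mem_interior hl hz))
    (h.smul_mem_interior (inv_pos.2 hl) (hmaps hz)) ?_
  rw [hinv.2 (h.smul_mem_interior hl hz), hanti _ (inv_pos.2 hl) _ (hmaps hz), inv_inv, hinv.2 hz]

end IsOrderUnitSpace

omit [NormedSpace ℝ V] in
lemma IsOrderAntimorphism.invFunOn {C : Set V} {g : V → V}
    (hbij : BijOn g (interior C) (interior C)) (hmor : IsOrderAntimorphism C g) :
    IsOrderAntimorphism C (Function.invFunOn g (interior C)) := fun z hz w hw => by
  have hinv := hbij.invOn_invFunOn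
  have hmaps := hbij.surjOn.mapsTo_invFunOn
  simpa only [hinv.2 hz, hinv.2 hw] using (hmor _ (hmaps hw) _ (hmaps hz)).symm

/-- **Lemma** (planes map to planes). A bijective antihomogeneous
order-antimorphism of a strictly convex cone maps `C°(x,y)` onto `C°(g x, g y)`,
and `g x, g y` are linearly independent whenever `x, y` are. -/
theorem orderAntimorphism_maps_planes
    (C : Set V) (u : V) (hous : IsOrderUnitSpace C u) (hsc : StrictlyConvexCone C)
    (g : V → V) (hbij : Set.BijOn g (interior C) (interior C))
    (hanti : IsAntihomogeneous C g) (hmor : IsOrderAntimorphism C g)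
    (x y : V) (hx : x ∈ interior C) (hy : y ∈ interior C)
    (hind : LinearIndependent ℝ ![x, y]) :
    LinearIndependent ℝ ![g x, g y] ∧
    g '' (((Submodule.span ℝ {x, y} : Submodule ℝ V) : Set V) ∩ interior C) =
      ((Submodule.span ℝ {g x, g y} : Submodule ℝ V) : Set V) ∩ interior C := by
  have : Nontrivial V := ⟨⟨x, 0, hind.ne_zero 0⟩⟩
  have hgind := hous.linearIndependent_apply hbij.mapsTo hbij.injOn hanti hx hy hind
  have hinv := hbij.invOn_invFunOn
  refine ⟨hgind, subset_antisymm ?_ fun w ⟨hwP, hw⟩ => ?_⟩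
  · rintro _ ⟨v, ⟨hvP, hv⟩, rfl⟩
    exact ⟨hous.apply_mem_span_pair hsc hbij.mapsTo hbij.injOn hanti hmor hx hy hind hvP hv,
      hbij.mapsTo hv⟩
  · have hfw := hous.apply_mem_span_pair hsc hbij.surjOn.mapsTo_invFunOn hinv.2.injOn
      (hous.isAntihomogeneous_invFunOn hbij hanti) (hmor.invFunOn hbij) (hbij.mapsTo hx)
      (hbij.mapsTo hy) hgind hwP hw
    rw [hinv.1 hx, hinv.1 hy] at hfw
    exact ⟨_, ⟨hfw, hbij.surjOn.mapsTo_invFunOn hw⟩, hinv.2 hw⟩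
end

section
/- Let (V,C,u) be an order unit space with a smooth cone, η ∈ ∂C ∖ {0}, and φ the state with φ(η) = 0. Suppose z ∈ C with φ(z) > 0, and for 0 < s ≤ 1 set y_s = (1−s)η + su and z_s = (1−s)z + su (both in C°). If for each s ∈ (0,1], φ_s is a state with M(z_s/y_s) = φ_s(z_s)/φ_s(y_s), then φ_s(η) → 0 as s → 0⁺, and φ_s converges to φ in the weak* topology as s → 0⁺ (i.e. φ_s(v) → φ(v) for every v ∈ V). -/
open Set Filter Topology

variable {V : Type*} [NormedAddCommGroup V] [NormedSpace ℝ V]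

/-- The cone `C` is smooth: every nonzero boundary point has a unique supporting
state. -/
def SmoothCone (C : Set V) (u : V) : Prop :=
  ∀ η ∈ frontier C, η ≠ 0 → ∃! φ : V →ₗ[ℝ] ℝ, IsState C u φ ∧ φ η = 0

/-! Testing the attaining property `M(z_s/y_s) = φ_s(z_s)/φ_s(y_s)` against the state `φ`,
for which `φ(y_s) = s`, gives `φ(z_s)/s ≤ φ_s(z_s)/φ_s(y_s)`; as `φ(z_s) ≥ φ(z)/2` and
`φ_s(z_s) ≤ ‖z‖ + 1`, this forces `φ_s(η) = O(s)`. States lie in the compact product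
`∏ v, [-‖v‖, ‖v‖]`, and every cluster point of `φ_s` as `s → 0⁺` is a state vanishing at `η`,
hence equals `φ` by smoothness. -/

lemma div_le_Mratio {C : Set V} {φ : V →ₗ[ℝ] ℝ} (hφ : ∀ w ∈ C, 0 ≤ φ w) {x y : V}
    (hy : 0 < φ y) (hne : ∃ b : ℝ, 0 < b ∧ b • y - x ∈ C) : φ x / φ y ≤ Mratio C x y := by
  refine le_csInf hne ?_
  rintro b ⟨-, hb⟩
  have := hφ _ hb
  rw [map_sub, map_smul, smul_eq_mul] at this
  rw [div_le_iff₀ hy]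
  linarith

lemma le_mul_of_div_le_div {s p a b N : ℝ} (hs : s ∈ Ioc 0 (1 / 2)) (hp : 0 < p) (ha : 0 ≤ a)
    (hb : b ≤ N) (hN : 0 ≤ N)
    (h : ((1 - s) * p + s) / s ≤ ((1 - s) * b + s) / ((1 - s) * a + s)) :
    a ≤ 4 * (N + 1) / p * s := by
  obtain ⟨hs0, hs2⟩ := hs
  rw [div_le_div_iff₀ hs0 (by nlinarith)] at h
  have hlower : p / 2 * (a / 2) ≤ ((1 - s) * p + s) * ((1 - s) * a + s) :=
    mul_le_mul (by nlinarith) (by nlinarith) (by positivity) (by nlinarith)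
  have hupper : ((1 - s) * b + s) * s ≤ (N + 1) * s :=
    mul_le_mul_of_nonneg_right (by nlinarith) hs0.le
  rw [div_mul_eq_mul_div, le_div_iff₀ hp]
  nlinarith

namespace IsOrderUnitSpace

variable {C : Set V} {u : V}

lemma add_mem_s15 (h : IsOrderUnitSpace C u) {x y : V} (hx : x ∈ C) (hy : y ∈ C) :
    x + y ∈ C := by
  have hmid := h.convex hx hy (show (0 : ℝ) ≤ 1 / 2 by norm_num)
    (show (0 : ℝ) ≤ 1 / 2 by norm_num) (by norm_num)
  convert h.smul_mem 2 (by norm_num) _ hmid using 1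
  module

lemma add_smul_mem_of_norm_lt (h : IsOrderUnitSpace C u) {x : V} {l : ℝ} (hl : ‖x‖ < l) :
    x + l • u ∈ C := by
  have hne : {l : ℝ | 0 < l ∧ x + l • u ∈ C ∧ l • u - x ∈ C}.Nonempty := by
    obtain ⟨l₁, hl₁, hx₁⟩ := h.order_unit x
    obtain ⟨l₂, hl₂, hx₂⟩ := h.order_unit (-x)
    refine ⟨l₁ + l₂ + 1, by positivity, ?_, ?_⟩
    · convert h.add_mem_s15 (h.smul_mem (l₁ + 1) (by positivity) u h.unit_mem) hx₂ using 1
      module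
    · convert h.add_mem_s15 (h.smul_mem (l₂ + 1) (by positivity) u h.unit_mem) hx₁ using 1
      module
  rw [h.norm_eq] at hl
  obtain ⟨l', ⟨-, hl', -⟩, hlt⟩ := exists_lt_of_csInf_lt hne hl
  convert h.add_mem_s15 hl' (h.smul_mem (l - l') (by linarith) u h.unit_mem) using 1
  module

lemma smul_sub_mem_of_norm_lt (h : IsOrderUnitSpace C u) {x : V} {l : ℝ} (hl : ‖x‖ < l) :
    l • u - x ∈ C := by
  rw [sub_eq_neg_add]
  exact h.add_smul_mem_of_norm_lt (by rwa [norm_neg])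

lemma abs_apply_le_norm (h : IsOrderUnitSpace C u) {φ : V →ₗ[ℝ] ℝ} (hφ : IsState C u φ)
    (x : V) : |φ x| ≤ ‖x‖ := by
  refine le_of_forall_gt_imp_ge_of_dense fun l hl => abs_le.mpr ⟨?_, ?_⟩
  · have := hφ.1 _ (h.add_smul_mem_of_norm_lt hl)
    rw [map_add, map_smul, hφ.2, smul_eq_mul, mul_one] at this
    linarith
  · have := hφ.1 _ (h.smul_sub_mem_of_norm_lt hl)
    rw [map_sub, map_smul, hφ.2, smul_eq_mul, mul_one] at this
    linarith

lemma mem_of_forall_add_smul_mem (h : IsOrderUnitSpace C u) {x : V}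
    (hx : ∀ ε : ℝ, 0 < ε → x + ε • u ∈ C) : x ∈ C := by
  have harch : ∀ n : ℕ, 0 < n → u - (n : ℝ) • (-x) ∈ C := by
    intro n hn
    have hn0 : (0 : ℝ) < n := by positivity
    convert h.smul_mem n hn0.le _ (hx _ (inv_pos.mpr hn0)) using 1
    rw [smul_add, smul_smul, mul_inv_cancel₀ hn0.ne', one_smul, smul_neg, sub_neg_eq_add,
      add_comm]
  simpa using h.archimedean (-x) u h.unit_mem harch

lemma isClosed_s15 (h : IsOrderUnitSpace C u) : IsClosed C := by
  refine isClosed_of_closure_subset fun x hx => h.mem_of_forall_add_smul_mem fun ε hε => ?_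
  obtain ⟨y, hy, hxy⟩ := Metric.mem_closure_iff.mp hx ε hε
  rw [dist_eq_norm] at hxy
  convert h.add_mem_s15 (h.add_smul_mem_of_norm_lt hxy) hy using 1
  module

lemma exists_smul_sub_mem_s15 (h : IsOrderUnitSpace C u) {y : V} {t : ℝ} (ht : 0 < t)
    (hy : y - t • u ∈ C) (x : V) : ∃ b : ℝ, 0 < b ∧ b • y - x ∈ C := by
  obtain ⟨l, hl, hx⟩ := h.order_unit x
  refine ⟨(l + 1) / t, by positivity, ?_⟩
  have := h.add_mem_s15 (h.smul_mem ((l + 1) / t) (by positivity) _ hy)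
    (h.add_mem_s15 h.unit_mem hx)
  convert this using 1
  rw [smul_sub, smul_smul, div_mul_cancel₀ _ ht.ne']
  module

lemma apply_le_of_Mratio_eq (h : IsOrderUnitSpace C u) {η z : V} (hη : η ∈ C)
    {φ ψ : V →ₗ[ℝ] ℝ} (hφ : IsState C u φ) (hφη : φ η = 0) (hφz : 0 < φ z)
    (hψ : IsState C u ψ) {s : ℝ} (hs : s ∈ Ioc 0 (1 / 2))
    (hM : Mratio C ((1 - s) • z + s • u) ((1 - s) • η + s • u) =
      ψ ((1 - s) • z + s • u) / ψ ((1 - s) • η + s • u)) :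
    ψ η ≤ 4 * (‖z‖ + 1) / φ z * s := by
  have hy : (1 - s) • η + s • u - s • u ∈ C := by
    rw [add_sub_cancel_right]
    exact h.smul_mem _ (by linarith [hs.2]) η hη
  have hle := div_le_Mratio (x := (1 - s) • z + s • u) hφ.1 (by simp [hφη, hφ.2, hs.1])
    (h.exists_smul_sub_mem_s15 hs.1 hy _)
  simp only [hM, map_add, map_smul, smul_eq_mul, hφη, hφ.2, hψ.2, mul_zero, zero_add,
    mul_one] at hle
  exact le_mul_of_div_le_div hs hφz (hψ.1 η hη)
    (abs_le.mp (h.abs_apply_le_norm hψ z)).2 (norm_nonneg z) hle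

theorem tendsto_of_tendsto_apply_eq_zero (h : IsOrderUnitSpace C u) {η : V}
    {φ : V →ₗ[ℝ] ℝ} (huniq : ∀ ψ, IsState C u ψ → ψ η = 0 → ψ = φ) {ι : Type*}
    {l : Filter ι} {ψ : ι → V →ₗ[ℝ] ℝ} (hψ : ∀ᶠ i in l, IsState C u (ψ i))
    (hψη : Tendsto (fun i => ψ i η) l (𝓝 0)) :
    Tendsto (fun i => ⇑(ψ i)) l (𝓝 ⇑φ) := by
  refine (isCompact_univ_pi fun v => isCompact_Icc (a := -‖v‖) (b := ‖v‖))
    |>.tendsto_nhds_of_unique_mapClusterPt ?_ fun f _ hf => ?_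
  · filter_upwards [hψ] with i hi
    exact fun v _ => abs_le.mp (h.abs_apply_le_norm hi v)
  obtain ⟨U, hUl, hU⟩ := mapClusterPt_iff_ultrafilter.mp hf
  have hUv : ∀ v, Tendsto (fun i => ψ i v) U (𝓝 (f v)) := tendsto_pi_nhds.mp hU
  have hψU : ∀ᶠ i in (U : Filter ι), IsState C u (ψ i) := hψ.filter_mono hUl
  let ψ' := linearMapOfTendsto f ψ hU
  have hψ' : IsState C u ψ' := by
    refine ⟨fun x hx => ge_of_tendsto (hUv x) (hψU.mono fun i hi => hi.1 x hx), ?_⟩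
    exact tendsto_nhds_unique (hUv u)
      (tendsto_const_nhds.congr' (hψU.mono fun i hi => hi.2.symm))
  have hψ'η : ψ' η = 0 := tendsto_nhds_unique (hUv η) (hψη.mono_left hUl)
  rw [← huniq ψ' hψ' hψ'η]
  rfl

end IsOrderUnitSpace

theorem attaining_states_weakstar_converge_general
    (C : Set V) (u : V) (hous : IsOrderUnitSpace C u) (hsm : SmoothCone C u)
    (η : V) (hη : η ∈ frontier C) (hη0 : η ≠ 0)
    (φ : V →ₗ[ℝ] ℝ) (hφ : IsState C u φ) (hφη : φ η = 0)
    (z : V) (hφz : 0 < φ z)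
    (φs : ℝ → (V →ₗ[ℝ] ℝ))
    (hφs : ∀ s ∈ Set.Ioc (0:ℝ) 1, IsState C u (φs s) ∧
      Mratio C ((1 - s) • z + s • u) ((1 - s) • η + s • u) =
        φs s ((1 - s) • z + s • u) / φs s ((1 - s) • η + s • u)) :
    Tendsto (fun s : ℝ => φs s η) (𝓝[>] (0:ℝ)) (𝓝 0) ∧
    ∀ v : V, Tendsto (fun s : ℝ => φs s v) (𝓝[>] (0:ℝ)) (𝓝 (φ v)) := by
  have hηC : η ∈ C := hous.isClosed_s15.frontier_subset hη
  have hstates : ∀ᶠ s in 𝓝[>] (0 : ℝ), IsState C u (φs s) := by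
    filter_upwards [Ioc_mem_nhdsGT one_pos] with s hs using (hφs s hs).1
  have hφsη : Tendsto (fun s : ℝ => φs s η) (𝓝[>] (0 : ℝ)) (𝓝 0) := by
    have hlin : Tendsto (fun s : ℝ => 4 * (‖z‖ + 1) / φ z * s) (𝓝[>] (0 : ℝ)) (𝓝 0) := by
      simpa using tendsto_nhdsWithin_of_tendsto_nhds ((continuous_const_mul _).tendsto (0 : ℝ))
    refine tendsto_of_tendsto_of_tendsto_of_le_of_le' tendsto_const_nhds hlin ?_ ?_
    · filter_upwards [hstates] with s hs using hs.1 η hηC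
    · filter_upwards [Ioc_mem_nhdsGT (show (0 : ℝ) < 1 / 2 by norm_num)] with s hs
      have hs1 : s ∈ Ioc (0 : ℝ) 1 := ⟨hs.1, by linarith [hs.2]⟩
      exact hous.apply_le_of_Mratio_eq hηC hφ hφη hφz (hφs s hs1).1 hs (hφs s hs1).2
  refine ⟨hφsη, tendsto_pi_nhds.mp (hous.tendsto_of_tendsto_apply_eq_zero ?_ hstates hφsη)⟩
  exact fun ψ hψ hψη => (hsm η hη hη0).unique ⟨hψ, hψη⟩ ⟨hφ, hφη⟩

/-- **Lemma 2.4**. In an order unit space with a smooth cone, states `φ_s`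
attaining `M(z_s/y_s)` (for `y_s = (1−s)η + su`, `z_s = (1−s)z + su`) satisfy
`φ_s(η) → 0` and `φ_s → φ` in the weak* topology as `s → 0⁺`. -/
theorem attaining_states_weakstar_converge
    (C : Set V) (u : V) (hous : IsOrderUnitSpace C u) (hsm : SmoothCone C u)
    (η : V) (hη : η ∈ frontier C) (hη0 : η ≠ 0)
    (φ : V →ₗ[ℝ] ℝ) (hφ : IsState C u φ) (hφη : φ η = 0)
    (z : V) (hz : z ∈ C) (hφz : 0 < φ z)
    (φs : ℝ → (V →ₗ[ℝ] ℝ))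
    (hφs : ∀ s ∈ Set.Ioc (0:ℝ) 1, IsState C u (φs s) ∧
      Mratio C ((1 - s) • z + s • u) ((1 - s) • η + s • u) =
        φs s ((1 - s) • z + s • u) / φs s ((1 - s) • η + s • u)) :
    Tendsto (fun s : ℝ => φs s η) (𝓝[>] (0:ℝ)) (𝓝 0) ∧
    ∀ v : V, Tendsto (fun s : ℝ => φs s v) (𝓝[>] (0:ℝ)) (𝓝 (φ v)) :=
  attaining_states_weakstar_converge_general C u hous hsm η hη hη0 φ hφ hφη z hφz φs hφs
end
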